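/- Let S be the free semigroup on the countably many generators (s_n)_{n∈ℕ}. Then every very strongly productive ultrafilter on S is multiplicatively isomorphic to an ordered union ultrafilter, and hence sparse. -/

import Mathlib

/-- `𝔽`: the collection of finite nonempty subsets of `ℕ`. -/
abbrev FinsetNat := {a : Finset ℕ // a.Nonempty}

/-- `listMul a l` is the product `a * l₀ * l₁ * ⋯` of a nonempty list in a magma. -/
def listMul {S : Type*} [Mul S] : S → List S → S
  | a, [] => a
  | a, b :: l => a * listMul b l

/-- `finsetMul x a` is the product `∏_{i ∈ a} x i`, taken in increasing order of indices
(junk value `x 0` if `a` is empty). -/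
def finsetMul {S : Type*} [Mul S] (x : ℕ → S) (a : Finset ℕ) : S :=
  match (a.sort (· ≤ ·)).map x with
  | [] => x 0
  | b :: l => listMul b l

/-- `FPIn x D` is the set of products `∏_{i ∈ a} x i` (in increasing order of indices), where
`a` ranges over the finite nonempty subsets of `D`. -/
def FPIn {S : Type*} [Semigroup S] (x : ℕ → S) (D : Set ℕ) : Set S :=
  {s | ∃ a : Finset ℕ, a.Nonempty ∧ ↑a ⊆ D ∧ s = finsetMul x a}

/-- `FPfin x` is the set of products `∏_{i ∈ a} x i` (in increasing order of indices), where
`a` ranges over all finite nonempty subsets of `ℕ`. -/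
def FPfin {S : Type*} [Semigroup S] (x : ℕ → S) : Set S :=
  FPIn x Set.univ

/-- An ultrafilter `p` on a semigroup `S` is *strongly productive* if every member of `p`
contains a set of the form `FP x` that itself belongs to `p`. -/
def StronglyProductive {S : Type*} [Semigroup S] (p : Ultrafilter S) : Prop :=
  ∀ A ∈ p, ∃ x : ℕ → S, FPfin x ⊆ A ∧ FPfin x ∈ p

/-- A sequence in `𝔽` is *ordered* if `max (b n) < min (b (n+1))` for all `n`. -/
def OrderedSeq (b : ℕ → FinsetNat) : Prop :=
  ∀ n : ℕ, (b n : Finset ℕ).max' (b n).2 < (b (n + 1) : Finset ℕ).min' (b (n + 1)).2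

/-- `FU b` is the set of unions `⋃_{i ∈ a} b i` with `a` a finite nonempty subset of `ℕ`. -/
def FU (b : ℕ → FinsetNat) : Set FinsetNat :=
  {c | ∃ a : Finset ℕ, a.Nonempty ∧ (c : Finset ℕ) = a.biUnion fun i => (b i : Finset ℕ)}

/-- An ultrafilter `q` on `𝔽` is an *ordered union ultrafilter* if every member of `q` contains
a set of the form `FU b`, with `b` ordered, that itself belongs to `q`. -/
def OrderedUnionUltrafilter (q : Ultrafilter FinsetNat) : Prop :=
  ∀ A ∈ q, ∃ b : ℕ → FinsetNat, OrderedSeq b ∧ FU b ⊆ A ∧ FU b ∈ q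

/-- A strongly productive ultrafilter `p` on `S` is *multiplicatively isomorphic to an ordered
union ultrafilter* if there is a sequence `x` in `S` such that `a ↦ ∏_{i ∈ a} x i` is injective
and `{f⁻¹[A] : A ∈ p}` is an ordered union ultrafilter on `𝔽`. -/
def MultIsoOrderedUnion {S : Type*} [Semigroup S] (p : Ultrafilter S) : Prop :=
  ∃ x : ℕ → S, Function.Injective (fun a : FinsetNat => finsetMul x (a : Finset ℕ)) ∧
    ∃ q : Ultrafilter FinsetNat, OrderedUnionUltrafilter q ∧
      ∀ B : Set FinsetNat,
        B ∈ q ↔ ∃ A ∈ p, B = (fun a : FinsetNat => finsetMul x (a : Finset ℕ)) ⁻¹' A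

/-- A strongly productive ultrafilter `p` on `S` is *sparse* if for every `A ∈ p` there are a
sequence `x` in `S` and an infinite set `D ⊆ ℕ` with infinite complement such that
`FP x ⊆ A` and the set of finite products of the subsequence of `x` indexed by `D` is in `p`. -/
def SparseSP {S : Type*} [Semigroup S] (p : Ultrafilter S) : Prop :=
  ∀ A ∈ p, ∃ (x : ℕ → S) (D : Set ℕ), D.Infinite ∧ D.compl.Infinite ∧
    FPfin x ⊆ A ∧ FPIn x D ∈ p

/-- A sequence `y` in the free semigroup on the generators `s n = FreeSemigroup.of n` is a
*product subsystem* of `(s n)` if there is an ordered sequence `(a n)` in `𝔽` with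
`y n = ∏_{i ∈ a n} s i`. -/
def ProductSubsystem (y : ℕ → FreeSemigroup ℕ) : Prop :=
  ∃ a : ℕ → FinsetNat, OrderedSeq a ∧
    ∀ n : ℕ, y n = finsetMul (fun k => FreeSemigroup.of k) (a n : Finset ℕ)

/-- An ultrafilter `p` on the free semigroup on countably many generators is *very strongly
productive* if every member of `p` contains a set `FP y`, with `y` a product subsystem of the
sequence of generators, that itself belongs to `p`. -/
def VeryStronglyProductive (p : Ultrafilter (FreeSemigroup ℕ)) : Prop :=
  ∀ A ∈ p, ∃ y : ℕ → FreeSemigroup ℕ, ProductSubsystem y ∧ FPfin y ⊆ A ∧ FPfin y ∈ p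

/-!
With `f a = ∏_{i ∈ a} s i` for the generators `s i`, the finite products of a product subsystem
`y n = f (b n)` are exactly the images of the unions in `FU b`, and `f` is injective on the free
semigroup; so the pullback of `p` along `f` is an ordered union ultrafilter `q` with `f_* q = p`,
and sparseness of `p` follows from sparseness of `q`. For that, given `FU b ∈ q`, the ultrafilter
cannot contain an `FU c ⊆ FU b` of unions of blocks over intervals of indices, since the blocks of
`c 1` would fill a gap of `c 0 ∪ c 2`. So some `FU c ⊆ FU b` in `q` consists of unions with a
missing block `b k` in between; cutting each `c n` at such a block into a lower part `L n` and an
upper part `R n` and interleaving `L n, b k, R n` gives `x` with `FU x ⊆ FU b`, while `FU c` only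
uses the terms of index `≢ 1 mod 3`.
-/

open Finset

def Precedes (s t : Finset ℕ) : Prop :=
  ∀ m ∈ s, ∀ n ∈ t, m < n

section Precedes

variable {ι : Type*} {s s' t t' u : Finset ℕ}

lemma Precedes.mono (h : Precedes s t) (hs : s' ⊆ s) (ht : t' ⊆ t) : Precedes s' t' :=
  fun m hm n hn => h m (hs hm) n (ht hn)

lemma Precedes.trans (h₁ : Precedes s t) (ht : t.Nonempty) (h₂ : Precedes t u) :
    Precedes s u := by
  obtain ⟨k, hk⟩ := ht
  exact fun m hm n hn => (h₁ m hm k hk).trans (h₂ k hk n hn)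

lemma precedes_biUnion_left {e : Finset ι} {f : ι → Finset ℕ} :
    Precedes (e.biUnion f) t ↔ ∀ i ∈ e, Precedes (f i) t := by
  simp only [Precedes, mem_biUnion]
  grind

lemma precedes_biUnion_right {e : Finset ι} {f : ι → Finset ℕ} :
    Precedes s (e.biUnion f) ↔ ∀ i ∈ e, Precedes s (f i) := by
  simp only [Precedes, mem_biUnion]
  grind

end Precedes

lemma orderedSeq_iff_precedes {b : ℕ → FinsetNat} :
    OrderedSeq b ↔ ∀ n, Precedes (b n) (b (n + 1)) := by
  simp only [OrderedSeq, Precedes, max'_lt_iff, lt_min'_iff]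
  exact forall_congr' fun _ => forall₂_comm

namespace OrderedSeq

variable {b : ℕ → FinsetNat}

lemma precedes (hb : OrderedSeq b) {i j : ℕ} (hij : i < j) : Precedes (b i) (b j) := by
  induction j, hij using Nat.le_induction with
  | base => exact orderedSeq_iff_precedes.1 hb i
  | succ j _ ih => exact ih.trans (b j).2 (orderedSeq_iff_precedes.1 hb j)

lemma lt_of_precedes (hb : OrderedSeq b) {i j : ℕ} (h : Precedes (b i) (b j)) : i < j := by
  by_contra! hji
  obtain ⟨m, hm⟩ := (b i).2
  rcases hji.lt_or_eq with hji | rfl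
  · exact (h.trans (b j).2 (hb.precedes hji) m hm m hm).false
  · exact (h m hm m hm).false

end OrderedSeq

section FinsetMul

variable {S : Type*} [Semigroup S] (x : ℕ → S)

lemma finsetMul_singleton (i : ℕ) : finsetMul x {i} = x i := by
  simp [finsetMul, sort_singleton, listMul]

lemma finsetMul_insert_of_lt {a : ℕ} {s : Finset ℕ} (hs : s.Nonempty)
    (ha : ∀ n ∈ s, a < n) :
    finsetMul x (insert a s) = x a * finsetMul x s := by
  have hsort : (insert a s).sort (· ≤ ·) = a :: s.sort (· ≤ ·) :=
    sort_insert _ (fun n hn => (ha n hn).le) fun has => (ha a has).false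
  obtain ⟨h, t, hst⟩ : ∃ h t, s.sort (· ≤ ·) = h :: t :=
    List.exists_cons_of_ne_nil <|
      List.ne_nil_of_length_pos (by simpa [length_sort] using hs.card_pos)
  simp only [finsetMul, hsort, hst, List.map_cons, listMul]

lemma finsetMul_union {s t : Finset ℕ} (hs : s.Nonempty) (ht : t.Nonempty) (h : Precedes s t) :
    finsetMul x (s ∪ t) = finsetMul x s * finsetMul x t := by
  induction s using Finset.induction_on_min with
  | empty => exact absurd hs (by simp)
  | insert a s ha ih =>
    rcases s.eq_empty_or_nonempty with rfl | hs'
    · rw [insert_empty_eq, ← insert_eq,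
        finsetMul_insert_of_lt x ht fun n hn => h a (mem_singleton_self a) n hn,
        finsetMul_singleton]
    · have h' : Precedes s t := h.mono (subset_insert a s) subset_rfl
      rw [insert_union, finsetMul_insert_of_lt x (hs'.mono subset_union_left),
        finsetMul_insert_of_lt x hs' ha, ih hs' h', mul_assoc]
      intro n hn
      rcases mem_union.1 hn with hn | hn
      · exact ha n hn
      · exact h a (mem_insert_self a s) n hn

lemma finsetMul_biUnion {b : ℕ → FinsetNat} (hb : OrderedSeq b) {e : Finset ℕ}
    (he : e.Nonempty) :
    finsetMul (fun n => finsetMul x (b n : Finset ℕ)) e =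
      finsetMul x (e.biUnion fun n => (b n : Finset ℕ)) := by
  induction e using Finset.induction_on_min with
  | empty => exact absurd he (by simp)
  | insert a e ha ih =>
    rcases e.eq_empty_or_nonempty with rfl | he'
    · simp [finsetMul_singleton]
    · have hprec : Precedes (b a) (e.biUnion fun n => (b n : Finset ℕ)) :=
        precedes_biUnion_right.2 fun i hi => hb.precedes (ha i hi)
      rw [finsetMul_insert_of_lt _ he' ha, ih he', biUnion_insert,
        finsetMul_union x (b a).2 (he'.biUnion fun i _ => (b i).2) hprec]

end FinsetMul

def FUIn (b : ℕ → FinsetNat) (D : Set ℕ) : Set FinsetNat :=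
  {c | ∃ a : Finset ℕ, a.Nonempty ∧ ↑a ⊆ D ∧
    (c : Finset ℕ) = a.biUnion fun i => (b i : Finset ℕ)}

section FiniteUnions

variable {b c : ℕ → FinsetNat} {D : Set ℕ}

lemma FUIn_univ (b : ℕ → FinsetNat) : FUIn b Set.univ = FU b := by
  simp [FUIn, FU]

lemma apply_mem_FU (b : ℕ → FinsetNat) (n : ℕ) : b n ∈ FU b :=
  ⟨{n}, singleton_nonempty n, by simp⟩

lemma FU_subset_FUIn (h : ∀ n, c n ∈ FUIn b D) : FU c ⊆ FUIn b D := by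
  choose a ha haD hc using h
  rintro u ⟨e, he, hu⟩
  refine ⟨e.biUnion a, he.biUnion fun n _ => ha n, ?_, ?_⟩
  · simpa only [coe_biUnion] using Set.iUnion₂_subset fun n _ => haD n
  · rw [hu, biUnion_biUnion]
    exact biUnion_congr rfl fun n _ => hc n

lemma image_finsetMul_FUIn {S : Type*} [Semigroup S] (x : ℕ → S) (hb : OrderedSeq b)
    (D : Set ℕ) :
    (fun a : FinsetNat => finsetMul x (a : Finset ℕ)) '' FUIn b D =
      FPIn (fun n => finsetMul x (b n : Finset ℕ)) D := by
  ext w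
  constructor
  · rintro ⟨u, ⟨e, he, heD, hu⟩, rfl⟩
    exact ⟨e, he, heD, by simp only [finsetMul_biUnion x hb he, hu]⟩
  · rintro ⟨e, he, heD, rfl⟩
    exact ⟨⟨_, he.biUnion fun i _ => (b i).2⟩, ⟨e, he, heD, rfl⟩,
      (finsetMul_biUnion x hb he).symm⟩

end FiniteUnions

def interleave3 {α : Type*} (f g h : ℕ → α) (m : ℕ) : α :=
  if m % 3 = 0 then f (m / 3) else if m % 3 = 1 then g (m / 3) else h (m / 3)

section Interleave

variable {α : Type*} (f g h : ℕ → α) (n : ℕ)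

@[simp] lemma interleave3_three_mul : interleave3 f g h (3 * n) = f n := by
  simp [interleave3]

@[simp] lemma interleave3_three_mul_add_one : interleave3 f g h (3 * n + 1) = g n := by
  simp [interleave3, Nat.add_mod, Nat.mul_add_div]

@[simp] lemma interleave3_three_mul_add_two : interleave3 f g h (3 * n + 2) = h n := by
  simp [interleave3, Nat.add_mod, Nat.mul_add_div]

end Interleave

lemma orderedSeq_interleave3 {L M R : ℕ → FinsetNat} (hLM : ∀ n, Precedes (L n) (M n))
    (hMR : ∀ n, Precedes (M n) (R n)) (hRL : ∀ n, Precedes (R n) (L (n + 1))) :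
    OrderedSeq (interleave3 L M R) := by
  refine orderedSeq_iff_precedes.2 fun m => ?_
  obtain ⟨n, rfl | rfl | rfl⟩ : ∃ n, m = 3 * n ∨ m = 3 * n + 1 ∨ m = 3 * n + 2 :=
    ⟨m / 3, by omega⟩
  · simpa using hLM n
  · simpa using hMR n
  · simpa [show 3 * n + 2 + 1 = 3 * (n + 1) by ring] using hRL n

lemma exists_lt_notMem_lt_of_not_ordConnected {α : Type*} [LinearOrder α] {d : Set α}
    (h : ¬ d.OrdConnected) : ∃ i ∈ d, ∃ j ∈ d, ∃ k ∉ d, i < k ∧ k < j := by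
  obtain ⟨i, hi, j, hj, hij⟩ : ∃ i ∈ d, ∃ j ∈ d, ¬ Set.Icc i j ⊆ d := by
    simpa [Set.ordConnected_def] using h
  obtain ⟨k, ⟨hik, hkj⟩, hk⟩ := Set.not_subset.1 hij
  exact ⟨i, hi, j, hj, k, hk, hik.lt_of_ne (by rintro rfl; exact hk hi),
    hkj.lt_of_ne (by rintro rfl; exact hk hj)⟩

def nonIntervalUnions (b : ℕ → FinsetNat) : Set FinsetNat :=
  {c | ∃ d : Finset ℕ, d.Nonempty ∧
    (c : Finset ℕ) = d.biUnion (fun i => (b i : Finset ℕ)) ∧ ¬ (d : Set ℕ).OrdConnected}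

section NonIntervalUnions

variable {b : ℕ → FinsetNat}

lemma nonIntervalUnions_mem {q : Ultrafilter FinsetNat} (hq : OrderedUnionUltrafilter q)
    (hb : OrderedSeq b) (hbq : FU b ∈ q) : nonIntervalUnions b ∈ q := by
  by_contra hG
  obtain ⟨c, hco, hcsub, -⟩ :=
    hq _ (Filter.inter_mem hbq (Ultrafilter.compl_mem_iff_notMem.2 hG))
  have hcb (n : ℕ) := (hcsub (apply_mem_FU c n)).1
  obtain ⟨d₀, ⟨i, hi⟩, h₀⟩ := hcb 0
  obtain ⟨d₁, ⟨k, hk⟩, h₁⟩ := hcb 1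
  obtain ⟨d₂, ⟨j, hj⟩, h₂⟩ := hcb 2
  have hblock {n l : ℕ} {d : Finset ℕ}
      (hc : (c n : Finset ℕ) = d.biUnion fun i => (b i : Finset ℕ)) (hl : l ∈ d) :
      (b l : Finset ℕ) ⊆ c n :=
    hc ▸ subset_biUnion_of_mem (fun i => (b i : Finset ℕ)) hl
  have hlt {m n l l' : ℕ} {d d' : Finset ℕ} (hmn : m < n)
      (hc : (c m : Finset ℕ) = d.biUnion fun i => (b i : Finset ℕ)) (hl : l ∈ d)
      (hc' : (c n : Finset ℕ) = d'.biUnion fun i => (b i : Finset ℕ)) (hl' : l' ∈ d') :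
      l < l' :=
    hb.lt_of_precedes ((hco.precedes hmn).mono (hblock hc hl) (hblock hc' hl'))
  have hgap : (⟨(c 0 : Finset ℕ) ∪ c 2, (c 0).2.mono subset_union_left⟩ : FinsetNat) ∈
      FU c ∩ nonIntervalUnions b := by
    refine ⟨⟨{0, 2}, by simp, by simp⟩, d₀ ∪ d₂, ⟨i, mem_union_left _ hi⟩,
      by rw [union_biUnion, ← h₀, ← h₂], fun hconn => ?_⟩
    have hkd : k ∈ d₀ ∪ d₂ := hconn.out (by simp [hi]) (by simp [hj])
      ⟨(hlt zero_lt_one h₀ hi h₁ hk).le, (hlt one_lt_two h₁ hk h₂ hj).le⟩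
    rcases mem_union.1 hkd with hk' | hk'
    · exact (hlt zero_lt_one h₀ hk' h₁ hk).false
    · exact (hlt one_lt_two h₁ hk h₂ hk').false
  exact (hcsub hgap.1).2 hgap.2

lemma exists_split_of_mem_nonIntervalUnions (hb : OrderedSeq b) {c : FinsetNat}
    (hc : c ∈ nonIntervalUnions b) :
    ∃ (L R : FinsetNat) (k : ℕ), L ∈ FU b ∧ R ∈ FU b ∧
      Precedes L (b k) ∧ Precedes (b k) R ∧
      (c : Finset ℕ) = (L : Finset ℕ) ∪ R := by
  obtain ⟨d, -, hcd, hnc⟩ := hc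
  obtain ⟨i, hi, j, hj, k, hk, hik, hkj⟩ := exists_lt_notMem_lt_of_not_ordConnected hnc
  have hlow : (d.filter (· < k)).Nonempty := ⟨i, mem_filter.2 ⟨hi, hik⟩⟩
  have hhigh : (d.filter (k < ·)).Nonempty := ⟨j, mem_filter.2 ⟨hj, hkj⟩⟩
  refine ⟨⟨_, hlow.biUnion fun i _ => (b i).2⟩, ⟨_, hhigh.biUnion fun i _ => (b i).2⟩, k,
    ⟨_, hlow, rfl⟩, ⟨_, hhigh, rfl⟩,
    precedes_biUnion_left.2 fun i hi => hb.precedes (mem_filter.1 hi).2,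
    precedes_biUnion_right.2 fun i hi => hb.precedes (mem_filter.1 hi).2, ?_⟩
  rw [hcd, ← union_biUnion]
  congr 1
  ext m
  simp only [mem_union, mem_filter]
  rcases lt_trichotomy m k with h | rfl | h <;> simp_all

end NonIntervalUnions

theorem OrderedUnionUltrafilter.exists_sparse {q : Ultrafilter FinsetNat}
    (hq : OrderedUnionUltrafilter q) {B : Set FinsetNat} (hB : B ∈ q) :
    ∃ x : ℕ → FinsetNat, OrderedSeq x ∧ ∃ D : Set ℕ, D.Infinite ∧ Dᶜ.Infinite ∧
      FU x ⊆ B ∧ FUIn x D ∈ q := by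
  obtain ⟨b, hb, hbB, hbq⟩ := hq B hB
  obtain ⟨c, hc, hcsub, hcq⟩ := hq _ (Filter.inter_mem hbq (nonIntervalUnions_mem hq hb hbq))
  choose L R k hL hR hLk hkR hLR using
    fun n => exists_split_of_mem_nonIntervalUnions hb (hcsub (apply_mem_FU c n)).2
  have hRL (n : ℕ) : Precedes (R n) (L (n + 1)) :=
    (orderedSeq_iff_precedes.1 hc n).mono (by rw [hLR n]; exact subset_union_right)
      (by rw [hLR (n + 1)]; exact subset_union_left)
  refine ⟨interleave3 L (fun n => b (k n)) R, orderedSeq_interleave3 hLk hkR hRL,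
    {m | m % 3 ≠ 1}, ?_, ?_, ?_, ?_⟩
  · exact Set.infinite_of_injective_forall_mem (f := fun n => 3 * n)
      (fun _ _ h => by simp only at h; omega) fun n => by simp
  · exact Set.infinite_of_injective_forall_mem (f := fun n => 3 * n + 1)
      (fun _ _ h => by simp only at h; omega) fun n => by simp [Nat.add_mod]
  · rw [← FUIn_univ] at hbB
    refine (FU_subset_FUIn fun m => ?_).trans hbB
    rw [FUIn_univ]
    obtain ⟨n, rfl | rfl | rfl⟩ : ∃ n, m = 3 * n ∨ m = 3 * n + 1 ∨ m = 3 * n + 2 :=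
      ⟨m / 3, by omega⟩
    · simpa using hL n
    · simpa using apply_mem_FU b (k n)
    · simpa using hR n
  · refine Filter.mem_of_superset hcq
      (FU_subset_FUIn fun n => ⟨{3 * n, 3 * n + 2}, by simp, ?_, ?_⟩)
    · simp [Set.insert_subset_iff, Nat.add_mod]
    · simp [hLR n]

lemma Ultrafilter.map_eq_of_forall_mem_iff {α β : Type*} {f : α → β} {p : Ultrafilter β}
    {q : Ultrafilter α} (h : ∀ B, B ∈ q ↔ ∃ A ∈ p, B = f ⁻¹' A) : q.map f = p :=
  Ultrafilter.eq_of_le fun A hA => (h _).2 ⟨A, hA, rfl⟩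

theorem MultIsoOrderedUnion.sparseSP {S : Type*} [Semigroup S] {p : Ultrafilter S}
    (hp : MultIsoOrderedUnion p) : SparseSP p := by
  obtain ⟨x, -, q, hq, hpq⟩ := hp
  have hmap := Ultrafilter.map_eq_of_forall_mem_iff hpq
  intro A hA
  obtain ⟨b, hb, D, hD, hDc, hbA, hbDq⟩ := hq.exists_sparse ((hpq _).2 ⟨A, hA, rfl⟩)
  refine ⟨fun n => finsetMul x (b n : Finset ℕ), D, hD, hDc, ?_, ?_⟩
  · rw [FPfin, ← image_finsetMul_FUIn x hb, FUIn_univ]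
    exact (Set.image_mono hbA).trans (Set.image_preimage_subset _ _)
  · rw [← image_finsetMul_FUIn x hb, ← hmap]
    exact Filter.image_mem_map hbDq

lemma head_cons_tail_finsetMul_of {a : Finset ℕ} (ha : a.Nonempty) :
    (finsetMul FreeSemigroup.of a).head :: (finsetMul FreeSemigroup.of a).tail =
      a.sort (· ≤ ·) := by
  induction a using Finset.induction_on_min with
  | empty => exact absurd ha (by simp)
  | insert m s hm ih =>
    rcases s.eq_empty_or_nonempty with rfl | hs
    · simp [finsetMul_singleton, sort_singleton]
    · rw [finsetMul_insert_of_lt _ hs hm, sort_insert _ (fun n hn => (hm n hn).le)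
        fun hms => (hm m hms).false, ← ih hs]
      rfl

lemma injective_finsetMul_of :
    Function.Injective fun a : FinsetNat => finsetMul FreeSemigroup.of (a : Finset ℕ) := by
  intro a a' h
  have hsort : (a : Finset ℕ).sort (· ≤ ·) = (a' : Finset ℕ).sort (· ≤ ·) := by
    rw [← head_cons_tail_finsetMul_of a.2, ← head_cons_tail_finsetMul_of a'.2]
    simp only at h
    rw [h]
  exact Subtype.ext (by simpa using congrArg List.toFinset hsort)

lemma ProductSubsystem.exists_FPfin_eq {y : ℕ → FreeSemigroup ℕ} (hy : ProductSubsystem y) :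
    ∃ b, OrderedSeq b ∧
      FPfin y = (fun a : FinsetNat => finsetMul FreeSemigroup.of (a : Finset ℕ)) '' FU b := by
  obtain ⟨b, hb, rfl⟩ : ∃ b, OrderedSeq b ∧
      y = fun n => finsetMul FreeSemigroup.of (b n : Finset ℕ) := by
    obtain ⟨b, hb, hyb⟩ := hy
    exact ⟨b, hb, funext hyb⟩
  exact ⟨b, hb, by rw [FPfin, ← image_finsetMul_FUIn _ hb, FUIn_univ]⟩

theorem VeryStronglyProductive.multIsoOrderedUnion {p : Ultrafilter (FreeSemigroup ℕ)}
    (hp : VeryStronglyProductive p) : MultIsoOrderedUnion p := by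
  set f := fun a : FinsetNat => finsetMul FreeSemigroup.of (a : Finset ℕ)
  have hrange : Set.range f ∈ p := by
    obtain ⟨y, hy, -, hyp⟩ := hp Set.univ Filter.univ_mem
    obtain ⟨b, -, hyb⟩ := hy.exists_FPfin_eq
    exact Filter.mem_of_superset hyp (hyb ▸ Set.image_subset_range _ _)
  refine ⟨FreeSemigroup.of, injective_finsetMul_of, p.comap injective_finsetMul_of hrange, ?_,
    fun B => ?_⟩
  · intro B hB
    rw [Ultrafilter.mem_comap] at hB
    obtain ⟨y, hy, hyB, hyp⟩ := hp _ hB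
    obtain ⟨b, hb, hyb⟩ := hy.exists_FPfin_eq
    rw [hyb] at hyB hyp
    exact ⟨b, hb, (Set.image_subset_image_iff injective_finsetMul_of).1 hyB,
      (Ultrafilter.mem_comap _ _ _).2 hyp⟩
  · rw [Ultrafilter.mem_comap]
    constructor
    · exact fun hB => ⟨_, hB, (Set.preimage_image_eq B injective_finsetMul_of).symm⟩
    · rintro ⟨A, hA, rfl⟩
      rw [Set.image_preimage_eq_inter_range]
      exact Filter.inter_mem hA hrange

/-- Every very strongly productive ultrafilter on the free semigroup with countably many
generators is multiplicatively isomorphic to an ordered union ultrafilter, and hence sparse. -/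
theorem veryStronglyProductive_multIso_and_sparse (p : Ultrafilter (FreeSemigroup ℕ))
    (hvsp : VeryStronglyProductive p) :
    MultIsoOrderedUnion p ∧ SparseSP p :=
  ⟨hvsp.multIsoOrderedUnion, hvsp.multIsoOrderedUnion.sparseSP⟩
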